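/- Let (A, f) be a quadratic Lie algebra of finite dimension m over a field K of characteristic zero. Then (A, f) is isometrically isomorphic to a T*-extension (T*_w B, q_B) of some Lie algebra B by some cyclic 2-cocycle w if and only if m is even, say m = 2n, and A contains an isotropic ideal I (i.e. I ⊆ I^⊥ with respect to f) of dimension n. In this case B can be taken isomorphic, as a Lie algebra, to the quotient A/I. -/
import Mathlib


open Module

variable {K A : Type*}

/-- `(A, f)` is isometrically isomorphic to the T*-extension `(T*_w B, q_B)` of the
Lie algebra `B = (Kⁿ, mB)` by the cyclic 2-cocycle `w`. -/
def isTStarExtOf [Field K] [LieRing A] [LieAlgebra K A]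
    (f : A →ₗ[K] A →ₗ[K] K) (n : ℕ)
    (mB : (Fin n → K) →ₗ[K] (Fin n → K) →ₗ[K] (Fin n → K))
    (w : (Fin n → K) →ₗ[K] (Fin n → K) →ₗ[K] Module.Dual K (Fin n → K)) : Prop :=
  -- `mB` makes `B` a Lie algebra
  (∀ x y : Fin n → K, mB x y = - mB y x) ∧
  (∀ x y z : Fin n → K, mB x (mB y z) + mB y (mB z x) + mB z (mB x y) = 0) ∧
  -- `w` is a 2-cocycle
  (∀ a b : Fin n → K, w a b = - w b a) ∧
  (∀ a b c : Fin n → K, w (mB a b) c + w (mB b c) a + w (mB c a) b =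
      -((w b c) ∘ₗ mB a) + -((w c a) ∘ₗ mB b) + -((w a b) ∘ₗ mB c)) ∧
  -- `w` is cyclic
  (∀ a b c : Fin n → K, w a b c = w c a b ∧ w c a b = w b c a) ∧
  -- isometric isomorphism onto `B ⊕ B*` with the T*-extension bracket and the
  -- hyperbolic form
  ∃ g : A ≃ₗ[K] ((Fin n → K) × Module.Dual K (Fin n → K)),
    (∀ x y : A, g ⁅x, y⁆ =
      (mB (g x).1 (g y).1,
       w (g x).1 (g y).1 + (-((g y).2 ∘ₗ mB (g x).1)) - (-((g x).2 ∘ₗ mB (g y).1)))) ∧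
    (∀ x y : A, (g x).2 (g y).1 + (g y).2 (g x).1 = f x y)

theorem key_of_g [Field K] [LieRing A] [LieAlgebra K A]
    (f : A →ₗ[K] A →ₗ[K] K)
    (hinv : ∀ x y z, f ⁅x, y⁆ z = f x ⁅y, z⁆)
    {n : ℕ} {mB : (Fin n → K) →ₗ[K] (Fin n → K) →ₗ[K] (Fin n → K)}
    {w : (Fin n → K) →ₗ[K] (Fin n → K) →ₗ[K] Module.Dual K (Fin n → K)}
    (g : A ≃ₗ[K] ((Fin n → K) × Module.Dual K (Fin n → K)))
    (hg1 : ∀ x y : A, g ⁅x, y⁆ =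
      (mB (g x).1 (g y).1,
       w (g x).1 (g y).1 + (-((g y).2 ∘ₗ mB (g x).1)) - (-((g x).2 ∘ₗ mB (g y).1))))
    (hg2 : ∀ x y : A, (g x).2 (g y).1 + (g y).2 (g x).1 = f x y) :
    isTStarExtOf f n mB w := by
  set X : (Fin n → K) → A := fun a => g.symm (a, 0) with hX
  have hgX : ∀ a, g (X a) = (a, 0) := fun a => g.apply_symm_apply _
  have hbr : ∀ a b, g ⁅X a, X b⁆ = (mB a b, w a b) := by
    intro a b
    rw [hg1, hgX, hgX]
    simp
  -- skew symmetry of mB and w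
  have hskew : ∀ a b, (mB a b, w a b) = (- mB b a, - w b a) := by
    intro a b
    have h1 : ⁅X a, X b⁆ = -⁅X b, X a⁆ := (lie_skew _ _).symm
    have := hbr a b
    rw [h1, map_neg, hbr b a] at this
    rw [← this]; rfl
  have h1 : ∀ a b, mB a b = - mB b a := fun a b => congrArg Prod.fst (hskew a b)
  have h3 : ∀ a b, w a b = - w b a := fun a b => congrArg Prod.snd (hskew a b)
  -- double bracket
  have hdbl : ∀ a b c, g ⁅X a, ⁅X b, X c⁆⁆ =
      (mB a (mB b c), w a (mB b c) - (w b c) ∘ₗ mB a) := by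
    intro a b c
    rw [hg1, hgX, hbr]
    simp [sub_eq_add_neg]
  have hjac : ∀ a b c,
      (mB a (mB b c) + mB b (mB c a) + mB c (mB a b),
       (w a (mB b c) - (w b c) ∘ₗ mB a) + (w b (mB c a) - (w c a) ∘ₗ mB b)
         + (w c (mB a b) - (w a b) ∘ₗ mB c)) = ((0 : Fin n → K), (0 : Module.Dual K (Fin n → K))) := by
    intro a b c
    have hJ : ⁅X a, ⁅X b, X c⁆⁆ + ⁅X b, ⁅X c, X a⁆⁆ + ⁅X c, ⁅X a, X b⁆⁆ = 0 :=
      lie_jacobi (X a) (X b) (X c)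
    have := congrArg g hJ
    rw [map_add, map_add, map_zero, hdbl, hdbl, hdbl] at this
    exact this
  have h2 : ∀ a b c, mB a (mB b c) + mB b (mB c a) + mB c (mB a b) = 0 :=
    fun a b c => congrArg Prod.fst (hjac a b c)
  have h4' : ∀ a b c, (w a (mB b c) - (w b c) ∘ₗ mB a) + (w b (mB c a) - (w c a) ∘ₗ mB b)
         + (w c (mB a b) - (w a b) ∘ₗ mB c) = 0 :=
    fun a b c => congrArg Prod.snd (hjac a b c)
  have h4 : ∀ a b c, w (mB a b) c + w (mB b c) a + w (mB c a) b =
      -((w b c) ∘ₗ mB a) + -((w c a) ∘ₗ mB b) + -((w a b) ∘ₗ mB c) := by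
    intro a b c
    refine LinearMap.ext fun d => ?_
    have e1d := LinearMap.congr_fun (h4' a b c) d
    have s1 := LinearMap.congr_fun (h3 (mB a b) c) d
    have s2 := LinearMap.congr_fun (h3 (mB b c) a) d
    have s3 := LinearMap.congr_fun (h3 (mB c a) b) d
    simp only [LinearMap.add_apply, LinearMap.sub_apply, LinearMap.neg_apply,
      LinearMap.comp_apply, LinearMap.zero_apply] at e1d s1 s2 s3 ⊢
    linear_combination s1 + s2 + s3 - e1d
  -- cyclicity
  have hcyc1 : ∀ a b c, w a b c = w b c a := by
    intro a b c
    have e1 := hg2 ⁅X a, X b⁆ (X c)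
    have e2 := hg2 (X a) ⁅X b, X c⁆
    rw [hbr, hgX] at e1
    rw [hbr, hgX] at e2
    simp only [map_zero] at e1 e2
    have e3 := hinv (X a) (X b) (X c)
    rw [← e1, ← e2] at e3
    simpa using e3
  have hcyc : ∀ a b c, w a b c = w c a b ∧ w c a b = w b c a := by
    intro a b c
    have t1 := hcyc1 a b c
    have t2 := hcyc1 c a b
    exact ⟨t2.symm, t2.trans t1⟩
  exact ⟨h1, h2, h3, h4, hcyc, g, hg1, hg2⟩

theorem fwd [Field K] [LieRing A] [LieAlgebra K A] [FiniteDimensional K A]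
    (f : A →ₗ[K] A →ₗ[K] K) {n : ℕ}
    {mB : (Fin n → K) →ₗ[K] (Fin n → K) →ₗ[K] (Fin n → K)}
    {w : (Fin n → K) →ₗ[K] (Fin n → K) →ₗ[K] Module.Dual K (Fin n → K)}
    (h : isTStarExtOf f n mB w) :
    Module.finrank K A = 2 * n ∧
      ∃ I : LieIdeal K A, (∀ x ∈ I, ∀ y ∈ I, f x y = 0) ∧ Module.finrank K I = n := by
  obtain ⟨-, -, -, -, -, g, hg1, hg2⟩ := h
  have hfr : Module.finrank K A = 2 * n := by
    rw [g.finrank_eq, Module.finrank_prod, Subspace.dual_finrank_eq]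
    simp [Module.finrank_pi]
    ring
  refine ⟨hfr, ?_⟩
  set F : A →ₗ[K] (Fin n → K) :=
    (LinearMap.fst K (Fin n → K) (Module.Dual K (Fin n → K))) ∘ₗ (g : A →ₗ[K] _) with hF
  have hFapp : ∀ x : A, F x = (g x).1 := fun x => rfl
  have hlie : ∀ (x m : A), m ∈ LinearMap.ker F → ⁅x, m⁆ ∈ LinearMap.ker F := by
    intro x m hm
    rw [LinearMap.mem_ker, hFapp] at hm ⊢
    have := congrArg Prod.fst (hg1 x m)
    simp only at this
    rw [this, hm, map_zero]
  refine ⟨⟨⟨⟨⟨LinearMap.ker F, ?_⟩, ?_⟩, ?_⟩, fun {x m} hm => hlie x m hm⟩, ?_, ?_⟩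
  · intro a b ha hb; exact (LinearMap.ker F).add_mem ha hb
  · exact (LinearMap.ker F).zero_mem
  · intro c x hx; exact (LinearMap.ker F).smul_mem c hx
  · -- isotropic
    intro x hx y hy
    have hx' : (g x).1 = 0 := hx
    have hy' : (g y).1 = 0 := hy
    rw [← hg2, hx', hy', map_zero, map_zero, add_zero]
  · -- finrank
    have hsurj : LinearMap.range F = ⊤ := by
      rw [LinearMap.range_eq_top]
      intro v
      exact ⟨g.symm (v, 0), by rw [hFapp, g.apply_symm_apply]⟩
    have := LinearMap.finrank_range_add_finrank_ker F
    rw [hsurj] at this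
    have h1 : finrank K (⊤ : Submodule K (Fin n → K)) = n := by
      simp [Module.finrank_pi]
    show finrank K (LinearMap.ker F) = n
    omega

set_option maxHeartbeats 2000000 in
theorem construct [Field K] [CharZero K] [LieRing A] [LieAlgebra K A] [FiniteDimensional K A]
    (f : A →ₗ[K] A →ₗ[K] K)
    (hsymm : ∀ x y, f x y = f y x)
    (hnd : ∀ x, (∀ y, f x y = 0) → x = 0)
    (hinv : ∀ x y z, f ⁅x, y⁆ z = f x ⁅y, z⁆)
    (n : ℕ) (I : LieIdeal K A) (h2n : finrank K A = 2 * n)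
    (hiso : ∀ x ∈ I, ∀ y ∈ I, f x y = 0) (hrI : finrank K I = n) :
    ∃ (mB : (Fin n → K) →ₗ[K] (Fin n → K) →ₗ[K] (Fin n → K))
      (w : (Fin n → K) →ₗ[K] (Fin n → K) →ₗ[K] Module.Dual K (Fin n → K)),
      isTStarExtOf f n mB w ∧
      ∃ e : (Fin n → K) ≃ₗ[K] (A ⧸ I), ∀ x y : Fin n → K, e (mB x y) = ⁅e x, e y⁆ := by
  classical
  have hmem : ∀ z : A, z ∈ I.toSubmodule → z ∈ I := fun z h => h
  obtain ⟨W, hW⟩ := Submodule.exists_isCompl I.toSubmodule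
  have hrI' : finrank K I.toSubmodule = n := hrI
  have hrW : finrank K W = n := by
    have := Submodule.finrank_add_eq_of_isCompl hW
    omega
  have hrFin : finrank K (Fin n → K) = n := by simp
  -- the quotient equivalence
  set E : (A ⧸ I) ≃ₗ[K] W := Submodule.quotientEquivOfIsCompl I.toSubmodule W hW with hE
  have e₁ : (Fin n → K) ≃ₗ[K] W := LinearEquiv.ofFinrankEq _ _ (by rw [hrFin, hrW])
  set e : (Fin n → K) ≃ₗ[K] (A ⧸ I) := e₁.trans E.symm with he_def
  set π : A →ₗ[K] (A ⧸ I) := I.toSubmodule.mkQ with hπ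
  have hπI : ∀ z : A, z ∈ I.toSubmodule → π z = 0 := by
    intro z hz
    exact (Submodule.Quotient.mk_eq_zero _).mpr hz
  set s₀ : (Fin n → K) →ₗ[K] A := W.subtype ∘ₗ e₁.toLinearMap with hs₀
  have hπs₀ : ∀ u, π (s₀ u) = e u := fun u => rfl
  -- the map Θ : I → W*
  set Θ : I.toSubmodule →ₗ[K] Module.Dual K W :=
    W.subtype.dualMap ∘ₗ f ∘ₗ I.toSubmodule.subtype with hΘdef
  have hΘ : ∀ (i : I.toSubmodule) (t : W), Θ i t = f i t := fun i t => rfl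
  have hdec : ∀ a : A, ∃ y ∈ I.toSubmodule, ∃ z ∈ W, y + z = a := by
    intro a
    have : a ∈ I.toSubmodule ⊔ W := by rw [hW.sup_eq_top]; trivial
    exact Submodule.mem_sup.mp this
  have hΘker : ∀ i : I.toSubmodule, Θ i = 0 → i = 0 := by
    intro i h0
    apply Subtype.ext
    apply hnd
    intro y
    obtain ⟨y₁, hy₁, y₂, hy₂, rfl⟩ := hdec y
    rw [map_add]
    have e1 : f i y₁ = 0 := hiso _ (hmem _ i.2) _ (hmem _ hy₁)
    have e2 : f i y₂ = 0 := by
      have := congrArg (fun φ => φ ⟨y₂, hy₂⟩) h0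
      simpa [hΘ] using this
    simp [e1, e2]
  have hΘinj : Function.Injective Θ :=
    LinearMap.ker_eq_bot.mp (LinearMap.ker_eq_bot'.mpr hΘker)
  have hrdual : finrank K I.toSubmodule = finrank K (Module.Dual K W) := by
    rw [hrI', Subspace.dual_finrank_eq, hrW]
  set ΘE : I.toSubmodule ≃ₗ[K] Module.Dual K W :=
    LinearMap.linearEquivOfInjective Θ hΘinj hrdual with hΘE
  have hΘEapp : ∀ i, ΘE i = Θ i := fun i => LinearMap.linearEquivOfInjective_apply _ _ _
  set χ : (Fin n → K) →ₗ[K] I.toSubmodule :=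
    ΘE.symm.toLinearMap ∘ₗ ((2:K)⁻¹ • (W.subtype.dualMap ∘ₗ f ∘ₗ s₀)) with hχdef
  have hχ : ∀ (u : Fin n → K) (t : W), f (χ u) t = (2:K)⁻¹ * f (s₀ u) t := by
    intro u t
    have h1 : Θ (χ u) = (2:K)⁻¹ • ((W.subtype.dualMap ∘ₗ f ∘ₗ s₀) u) := by
      rw [hχdef]
      simp only [LinearMap.comp_apply, LinearEquiv.coe_coe]
      rw [← hΘEapp, ΘE.apply_symm_apply]
      rfl
    have := congrArg (fun φ => φ t) h1
    simpa [hΘ] using this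
  set σ : (Fin n → K) →ₗ[K] A := s₀ - I.toSubmodule.subtype ∘ₗ χ with hσdef
  have hσ : ∀ u, σ u = s₀ u - χ u := fun u => rfl
  have hπσ : ∀ u, π (σ u) = e u := by
    intro u
    rw [hσ, map_sub, hπs₀, hπI _ (χ u).2, sub_zero]
  have h2K : (2:K)⁻¹ * 2 = 1 := inv_mul_cancel₀ two_ne_zero
  have hσiso : ∀ u v, f (σ u) (σ v) = 0 := by
    intro u v
    have c1 : f (χ u) (s₀ v) = (2:K)⁻¹ * f (s₀ u) (s₀ v) := hχ u (e₁ v)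
    have c2 : f (χ v) (s₀ u) = (2:K)⁻¹ * f (s₀ v) (s₀ u) := hχ v (e₁ u)
    have c3 : f (χ u) (χ v) = 0 := hiso _ (hmem _ (χ u).2) _ (hmem _ (χ v).2)
    have c4 : f (s₀ u) (χ v) = f (χ v) (s₀ u) := hsymm _ _
    have c5 : f (s₀ u) (s₀ v) = f (s₀ v) (s₀ u) := hsymm _ _
    rw [hσ, hσ]
    simp only [map_sub, LinearMap.sub_apply]
    linear_combination (-1 : K) * c1 - c2 + c3 - c4 + (2:K)⁻¹ * c5 - (f (s₀ u) (s₀ v)) * h2K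
  -- the Lie bracket on Fin n → K
  set mB : (Fin n → K) →ₗ[K] (Fin n → K) →ₗ[K] (Fin n → K) :=
    LinearMap.mk₂ K (fun u v => e.symm ⁅e u, e v⁆)
      (fun u u' v => by simp only [map_add, add_lie])
      (fun c u v => by simp only [map_smul, smul_lie])
      (fun u v v' => by simp only [map_add, lie_add])
      (fun c u v => by simp only [map_smul, lie_smul]) with hmBdef
  have hmB : ∀ u v, mB u v = e.symm ⁅e u, e v⁆ := fun u v => rfl
  have heB : ∀ u v, e (mB u v) = ⁅e u, e v⁆ := by
    intro u v; rw [hmB, e.apply_symm_apply]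
  -- the cocycle
  set w : (Fin n → K) →ₗ[K] (Fin n → K) →ₗ[K] Module.Dual K (Fin n → K) :=
    LinearMap.mk₂ K (fun u v => σ.dualMap (f ⁅σ u, σ v⁆))
      (fun u u' v => by simp only [map_add, add_lie])
      (fun c u v => by simp only [map_smul, smul_lie])
      (fun u v v' => by simp only [map_add, lie_add])
      (fun c u v => by simp only [map_smul, lie_smul]) with hwdef
  have hw : ∀ u v c, w u v c = f ⁅σ u, σ v⁆ (σ c) := fun u v c => rfl
  -- the isometry
  set G : A →ₗ[K] ((Fin n → K) × Module.Dual K (Fin n → K)) :=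
    LinearMap.prod (e.symm.toLinearMap ∘ₗ π) (σ.dualMap ∘ₗ f) with hGdef
  have hG1 : ∀ x, (G x).1 = e.symm (π x) := fun x => rfl
  have hG2 : ∀ x c, (G x).2 c = f x (σ c) := fun x c => rfl
  have hπbr : ∀ x y : A, π ⁅x, y⁆ = ⁅π x, π y⁆ := fun x y => rfl
  have Hproj : ∀ z : A, z - σ (e.symm (π z)) ∈ I.toSubmodule := by
    intro z
    rw [← Submodule.Quotient.mk_eq_zero]
    show π (z - σ (e.symm (π z))) = 0
    rw [map_sub, hπσ, e.apply_symm_apply, sub_self]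
  have hρbr : ∀ u c : Fin n → K, e.symm (π ⁅σ u, σ c⁆) = mB u c := by
    intro u c
    rw [hπbr, hπσ, hπσ, ← heB, e.symm_apply_apply]
  have Hbr : ∀ u c : Fin n → K, ⁅σ u, σ c⁆ - σ (mB u c) ∈ I.toSubmodule := by
    intro u c
    have := Hproj ⁅σ u, σ c⁆
    rwa [hρbr] at this
  -- injectivity of G
  have hGker : ∀ x : A, G x = 0 → x = 0 := by
    intro x hx
    have hx1 : e.symm (π x) = 0 := congrArg Prod.fst hx
    have hx2 : ∀ c, f x (σ c) = 0 := by
      intro c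
      have := congrArg (fun p => p.2 c) hx
      simpa [hG2] using this
    have hxI : x ∈ I.toSubmodule := by
      rw [← Submodule.Quotient.mk_eq_zero]
      show π x = 0
      have := congrArg e hx1
      rwa [e.apply_symm_apply, map_zero] at this
    apply hnd
    intro y
    have hyd : y = σ (e.symm (π y)) + (y - σ (e.symm (π y))) := by abel
    rw [hyd, map_add, hx2, hiso _ (hmem _ hxI) _ (hmem _ (Hproj y)), add_zero]
  have hGinj : Function.Injective G :=
    LinearMap.ker_eq_bot.mp (LinearMap.ker_eq_bot'.mpr hGker)
  have hdim : finrank K A = finrank K ((Fin n → K) × Module.Dual K (Fin n → K)) := by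
    rw [h2n, Module.finrank_prod, Subspace.dual_finrank_eq, hrFin]
    ring
  set g : A ≃ₗ[K] ((Fin n → K) × Module.Dual K (Fin n → K)) :=
    LinearMap.linearEquivOfInjective G hGinj hdim with hgdef
  have hgG : ∀ x, g x = G x := fun x => LinearMap.linearEquivOfInjective_apply _ _ _
  -- the isometry property
  have hg2 : ∀ x y : A, (g x).2 (g y).1 + (g y).2 (g x).1 = f x y := by
    intro x y
    rw [hgG, hgG]
    show f x (σ (e.symm (π y))) + f y (σ (e.symm (π x))) = f x y
    set u := e.symm (π x) with hu
    set v := e.symm (π y) with hv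
    have a1 : f (x - σ u) (y - σ v) = 0 :=
      hiso _ (hmem _ (Hproj x)) _ (hmem _ (Hproj y))
    have a2 : f (σ u) (σ v) = 0 := hσiso u v
    have a4 : f (σ u) y = f y (σ u) := hsymm _ _
    simp only [map_sub, LinearMap.sub_apply] at a1
    linear_combination a2 - a1 - a4
  -- the bracket property
  have main : ∀ (u v c : Fin n → K) (i j : A), i ∈ I.toSubmodule → j ∈ I.toSubmodule →
      f ⁅σ u + i, σ v + j⁆ (σ c) =
        f ⁅σ u, σ v⁆ (σ c) - f (σ v + j) (σ (mB u c)) + f (σ u + i) (σ (mB v c)) := by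
    intro u v c i j hi hj
    have c1 : f ⁅σ u, j⁆ (σ c) = - f j ⁅σ u, σ c⁆ := by
      have h' := hinv j (σ u) (σ c)
      rw [← lie_skew (σ u) j, map_neg, LinearMap.neg_apply, h']
    have c2 : f ⁅i, σ v⁆ (σ c) = f i ⁅σ v, σ c⁆ := hinv _ _ _
    have c3 : f ⁅i, j⁆ (σ c) = 0 := by
      rw [hinv i j (σ c)]
      exact hiso _ (hmem _ hi) _ (hmem _ (lie_mem_left K A I j (σ c) hj))
    have c4 : f j (σ (mB u c)) = f j ⁅σ u, σ c⁆ := by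
      have := hiso _ (hmem _ hj) _ (hmem _ (Hbr u c))
      simp only [map_sub] at this
      linear_combination -this
    have c5 : f (σ v) (σ (mB u c)) = 0 := hσiso _ _
    have c6 : f i (σ (mB v c)) = f i ⁅σ v, σ c⁆ := by
      have := hiso _ (hmem _ hi) _ (hmem _ (Hbr v c))
      simp only [map_sub] at this
      linear_combination -this
    have c7 : f (σ u) (σ (mB v c)) = 0 := hσiso _ _
    simp only [add_lie, lie_add, map_add, LinearMap.add_apply]
    linear_combination c1 + c2 + c3 + c4 + c5 - c6 - c7
  have hg1 : ∀ x y : A, g ⁅x, y⁆ =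
      (mB (g x).1 (g y).1,
       w (g x).1 (g y).1 + (-((g y).2 ∘ₗ mB (g x).1)) - (-((g x).2 ∘ₗ mB (g y).1))) := by
    intro x y
    rw [hgG, hgG, hgG]
    refine Prod.ext ?_ ?_
    · show e.symm (π ⁅x, y⁆) = mB (e.symm (π x)) (e.symm (π y))
      rw [hmB, e.apply_symm_apply, e.apply_symm_apply, hπbr]
    · refine LinearMap.ext fun c => ?_
      simp only [hG1]
      set u := e.symm (π x) with hu
      set v := e.symm (π y) with hv
      show f ⁅x, y⁆ (σ c) = _
      have hxd : σ u + (x - σ u) = x := by abel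
      have hyd : σ v + (y - σ v) = y := by abel
      have hm := main u v c (x - σ u) (y - σ v) (Hproj x) (Hproj y)
      rw [hxd, hyd] at hm
      rw [hm]
      simp only [LinearMap.add_apply, LinearMap.sub_apply, LinearMap.neg_apply,
        LinearMap.comp_apply, hw, hG2]
      ring
  refine ⟨mB, w, key_of_g f hinv g hg1 hg2, e, heB⟩

/-- Bordemann's theorem: a quadratic Lie algebra `(A, f)` of dimension `m` is
isometrically isomorphic to a T*-extension iff `m = 2n` is even and `A` contains an
`n`-dimensional isotropic ideal `I`; in that case `B` can be taken isomorphic, as a Lie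
algebra, to the quotient `A/I`. -/
theorem stmt8 [Field K] [CharZero K] [LieRing A] [LieAlgebra K A] [FiniteDimensional K A]
    (f : A →ₗ[K] A →ₗ[K] K)
    (hsymm : ∀ x y, f x y = f y x)
    (hnd : ∀ x, (∀ y, f x y = 0) → x = 0)
    (hinv : ∀ x y z, f ⁅x, y⁆ z = f x ⁅y, z⁆) :
    ((∃ (n : ℕ) (mB : (Fin n → K) →ₗ[K] (Fin n → K) →ₗ[K] (Fin n → K))
        (w : (Fin n → K) →ₗ[K] (Fin n → K) →ₗ[K] Module.Dual K (Fin n → K)),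
        isTStarExtOf f n mB w)
      ↔
      (∃ n : ℕ, Module.finrank K A = 2 * n ∧
        ∃ I : LieIdeal K A, (∀ x ∈ I, ∀ y ∈ I, f x y = 0) ∧
          Module.finrank K I = n)) ∧
    (∀ (n : ℕ) (I : LieIdeal K A), Module.finrank K A = 2 * n →
      (∀ x ∈ I, ∀ y ∈ I, f x y = 0) → Module.finrank K I = n →
      ∃ (mB : (Fin n → K) →ₗ[K] (Fin n → K) →ₗ[K] (Fin n → K))
        (w : (Fin n → K) →ₗ[K] (Fin n → K) →ₗ[K] Module.Dual K (Fin n → K)),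
        isTStarExtOf f n mB w ∧
        ∃ e : (Fin n → K) ≃ₗ[K] (A ⧸ I),
          ∀ x y : Fin n → K, e (mB x y) = ⁅e x, e y⁆) := by
  constructor
  · constructor
    · rintro ⟨n, mB, w, h⟩
      obtain ⟨hfr, I, hI1, hI2⟩ := fwd f h
      exact ⟨n, hfr, I, hI1, hI2⟩
    · rintro ⟨n, hfr, I, hiso', hrI⟩
      obtain ⟨mB, w, h, -⟩ := construct f hsymm hnd hinv n I hfr hiso' hrI
      exact ⟨n, mB, w, h⟩
  · intro n I hfr hiso' hrI
    exact construct f hsymm hnd hinv n I hfr hiso' hrI
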